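/- The abelianization of Γ_B is isomorphic to ℤ/4 × ℤ/4. (Equivalently, H₁(B; ℤ) ≅ ℤ/4 ⊕ ℤ/4 for the flat 3-manifold B.) -/

import Mathlib

/-- `ℝ³` as `ℝ × ℝ × ℝ`. -/
abbrev V3 : Type := ℝ × ℝ × ℝ

/-- The linear map `diag(1,−1,−1)`. -/
noncomputable def dA : V3 ≃ₗ[ℝ] V3 :=
  (LinearEquiv.refl ℝ ℝ).prodCongr ((LinearEquiv.neg ℝ).prodCongr (LinearEquiv.neg ℝ))

/-- The linear map `diag(−1,−1,1)`. -/
noncomputable def dB : V3 ≃ₗ[ℝ] V3 :=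
  (LinearEquiv.neg ℝ).prodCongr ((LinearEquiv.neg ℝ).prodCongr (LinearEquiv.refl ℝ ℝ))

/-- The linear map `diag(−1,1,−1)`. -/
noncomputable def dC : V3 ≃ₗ[ℝ] V3 :=
  (LinearEquiv.neg ℝ).prodCongr ((LinearEquiv.refl ℝ ℝ).prodCongr (LinearEquiv.neg ℝ))

/-- Translation by `v` as an affine automorphism of `ℝ³`. -/
noncomputable def trV (v : V3) : V3 ≃ᵃ[ℝ] V3 := AffineEquiv.constVAdd ℝ V3 v

/-- `α̃(x₁,x₂,x₃) = (x₁+1/2, −x₂+1/2, −x₃)`. -/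
noncomputable def affAlpha : V3 ≃ᵃ[ℝ] V3 := dA.toAffineEquiv.trans (trV (1/2, 1/2, 0))

/-- `β̃(x₁,x₂,x₃) = (−x₁+1/2, −x₂, x₃+1/2)`. -/
noncomputable def affBeta : V3 ≃ᵃ[ℝ] V3 := dB.toAffineEquiv.trans (trV (1/2, 0, 1/2))

/-- `γ̃(x₁,x₂,x₃) = (−x₁, x₂+1/2, −x₃+1/2)`. -/
noncomputable def affGamma : V3 ≃ᵃ[ℝ] V3 := dC.toAffineEquiv.trans (trV (0, 1/2, 1/2))

abbrev W2 : Type := Bool × Bool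
abbrev Z3 : Type := ℤ × ℤ × ℤ

noncomputable def Dmat : W2 → (V3 ≃ₗ[ℝ] V3)
  | (false, false) => LinearEquiv.refl ℝ V3
  | (true, false) => dA
  | (false, true) => dB
  | (true, true) => dC

noncomputable def cvec : W2 → V3
  | (false, false) => (0, 0, 0)
  | (true, false) => (1/2, 1/2, 0)
  | (false, true) => (1/2, 0, 1/2)
  | (true, true) => (0, 1/2, 1/2)

def wmul (w w' : W2) : W2 := (xor w.1 w'.1, xor w.2 w'.2)

def ew (w : W2) (m : Z3) : Z3 :=
  ((if w.2 then -m.1 else m.1),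
   (if xor w.1 w.2 then -m.2.1 else m.2.1),
   (if w.1 then -m.2.2 else m.2.2))

def dl : W2 → W2 → Z3
  | (false,false), _ => (0,0,0)
  | (true,false), (false,false) => (0,0,0)
  | (true,false), (true,false) => (1,0,0)
  | (true,false), (false,true) => (1,0,-1)
  | (true,false), (true,true) => (0,0,-1)
  | (false,true), (false,false) => (0,0,0)
  | (false,true), (true,false) => (0,-1,0)
  | (false,true), (false,true) => (0,0,1)
  | (false,true), (true,true) => (0,-1,1)
  | (true,true), (false,false) => (0,0,0)
  | (true,true), (true,false) => (-1,1,0)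
  | (true,true), (false,true) => (-1,0,0)
  | (true,true), (true,true) => (0,1,0)

def castZ3 (m : Z3) : V3 := ((m.1 : ℝ), (m.2.1 : ℝ), (m.2.2 : ℝ))

noncomputable def iot (w : W2) (m : Z3) : V3 ≃ᵃ[ℝ] V3 :=
  (Dmat w).toAffineEquiv.trans (trV (cvec w + castZ3 m))

lemma affmul_apply (e f : V3 ≃ᵃ[ℝ] V3) (x : V3) : (e * f) x = e (f x) := rfl

lemma iot_mul (w w' : W2) (m m' : Z3) :
    iot w m * iot w' m' = iot (wmul w w') (dl w w' + ew w m' + m) := by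
  obtain ⟨m1, m2, m3⟩ := m
  obtain ⟨n1, n2, n3⟩ := m'
  rcases w with ⟨(_|_), (_|_)⟩ <;> rcases w' with ⟨(_|_), (_|_)⟩ <;>
  · apply AffineEquiv.ext
    rintro ⟨x1, x2, x3⟩
    simp only [affmul_apply, iot, Dmat, cvec, wmul, ew, dl, castZ3, trV, dA, dB, dC,
      Bool.xor_false, Bool.false_xor, Bool.xor_true, Bool.true_xor, Bool.not_false,
      Bool.not_true, Bool.xor_self, if_true, if_false,
      AffineEquiv.trans_apply, LinearEquiv.coe_toAffineEquiv, LinearEquiv.prodCongr_apply,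
      LinearEquiv.refl_apply, LinearEquiv.neg_apply, AffineEquiv.constVAdd_apply,
      Prod.mk_add_mk, vadd_eq_add, Prod.mk.injEq]
    push_cast
    repeat' apply And.intro
    all_goals first | ring | trivial

lemma iot_one : iot (false, false) (0, 0, 0) = 1 := by
  apply AffineEquiv.ext
  rintro ⟨x1, x2, x3⟩
  simp [iot, Dmat, cvec, castZ3, trV]

lemma apply_of_eq {e f : V3 ≃ᵃ[ℝ] V3} (h : e = f) (x : V3) : e x = f x := by rw [h]

set_option maxHeartbeats 1000000 in
lemma iot_inj {w w' : W2} {m m' : Z3} (h : iot w m = iot w' m') : w = w' ∧ m = m' := by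
  obtain ⟨m1, m2, m3⟩ := m
  obtain ⟨n1, n2, n3⟩ := m'
  have h0 := apply_of_eq h (0, 0, 0)
  have hx := apply_of_eq h (1, 0, 0)
  have hy := apply_of_eq h (0, 1, 0)
  have hz := apply_of_eq h (0, 0, 1)
  rcases w with ⟨(_|_), (_|_)⟩ <;> rcases w' with ⟨(_|_), (_|_)⟩ <;>
  · simp only [iot, Dmat, cvec, castZ3, trV, dA, dB, dC,
      AffineEquiv.trans_apply, LinearEquiv.coe_toAffineEquiv, LinearEquiv.prodCongr_apply,
      LinearEquiv.refl_apply, LinearEquiv.neg_apply, AffineEquiv.constVAdd_apply,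
      Prod.mk_add_mk, vadd_eq_add, Prod.mk.injEq] at h0 hx hy hz
    obtain ⟨a1, a2, a3⟩ := h0
    obtain ⟨b1, b2, b3⟩ := hx
    obtain ⟨c1, c2, c3⟩ := hy
    obtain ⟨d1, d2, d3⟩ := hz
    first
    | · refine ⟨rfl, ?_⟩
        have e1 : m1 = n1 := by exact_mod_cast show (m1 : ℝ) = n1 by linarith
        have e2 : m2 = n2 := by exact_mod_cast show (m2 : ℝ) = n2 by linarith
        have e3 : m3 = n3 := by exact_mod_cast show (m3 : ℝ) = n3 by linarith
        simp [e1, e2, e3]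
    | (exfalso; linarith)

def qf (m : Z3) : ZMod 4 × ZMod 4 :=
  (((2 * (m.1 + m.2.1) : ℤ) : ZMod 4), ((2 * (m.2.1 + m.2.2) : ℤ) : ZMod 4))

def valW : W2 → ZMod 4 × ZMod 4
  | (false, false) => (0, 0)
  | (true, false) => (1, 0)
  | (false, true) => (0, 1)
  | (true, true) => (3, 3)

def pf (w : W2) (m : Z3) : ZMod 4 × ZMod 4 := valW w + qf m

lemma qf_add (a b : Z3) : qf (a + b) = qf a + qf b := by
  unfold qf
  refine Prod.ext ?_ ?_ <;> · simp [Prod.fst_add, Prod.snd_add]; push_cast; ring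

lemma qf_ew (w : W2) (m : Z3) : qf (ew w m) = qf m := by
  obtain ⟨m1, m2, m3⟩ := m
  have h4 : (4 : ZMod 4) = 0 := rfl
  rcases w with ⟨(_|_), (_|_)⟩ <;>
  · unfold qf ew
    refine Prod.ext ?_ ?_ <;>
    · simp only [Bool.xor_false, Bool.false_xor, Bool.xor_true, Bool.true_xor,
        Bool.xor_self, Bool.not_false, Bool.not_true, reduceIte]
      push_cast
      first
      | ring1
      | linear_combination ((m1 : ZMod 4) + (m2 : ZMod 4)) * h4
      | linear_combination ((m2 : ZMod 4) + (m3 : ZMod 4)) * h4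
      | linear_combination ((m1 : ZMod 4)) * h4
      | linear_combination ((m2 : ZMod 4)) * h4
      | linear_combination ((m3 : ZMod 4)) * h4
      | linear_combination (-(m1 : ZMod 4) - (m2 : ZMod 4)) * h4
      | linear_combination (-(m2 : ZMod 4) - (m3 : ZMod 4)) * h4
      | linear_combination (-(m1 : ZMod 4)) * h4
      | linear_combination (-(m2 : ZMod 4)) * h4
      | linear_combination (-(m3 : ZMod 4)) * h4

lemma cocycle (w w' : W2) : valW (wmul w w') + qf (dl w w') = valW w + valW w' := by
  rcases w with ⟨(_|_), (_|_)⟩ <;> rcases w' with ⟨(_|_), (_|_)⟩ <;> decide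

lemma pf_mul (w w' : W2) (m m' : Z3) :
    pf (wmul w w') (dl w w' + ew w m' + m) = pf w m + pf w' m' := by
  unfold pf
  rw [qf_add, qf_add, qf_ew]
  have h := cocycle w w'
  linear_combination h

/-- The generating set `{t₁, t₂, t₃, α̃, β̃, γ̃}` of `Γ_B`. -/
noncomputable def genB : Set (V3 ≃ᵃ[ℝ] V3) :=
  {trV (1,0,0), trV (0,1,0), trV (0,0,1), affAlpha, affBeta, affGamma}

/-- The crystallographic group `Γ_B = π₁(B)`. -/
noncomputable def GammaB : Subgroup (V3 ≃ᵃ[ℝ] V3) := Subgroup.closure genB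

lemma wmul_self (w : W2) : wmul w w = (false, false) := by
  rcases w with ⟨(_|_), (_|_)⟩ <;> rfl

noncomputable def HB : Subgroup (V3 ≃ᵃ[ℝ] V3) where
  carrier := {g | ∃ w m, g = iot w m}
  one_mem' := ⟨(false, false), (0,0,0), iot_one.symm⟩
  mul_mem' := by
    rintro a b ⟨w, m, rfl⟩ ⟨w', m', rfl⟩
    exact ⟨wmul w w', dl w w' + ew w m' + m, iot_mul w w' m m'⟩
  inv_mem' := by
    rintro a ⟨w, m, rfl⟩
    refine ⟨w, -(dl w w) - ew w m, ?_⟩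
    have h : iot w (-(dl w w) - ew w m) * iot w m = 1 := by
      rw [iot_mul, wmul_self]
      have : dl w w + ew w m + (-(dl w w) - ew w m) = (0, 0, 0) := by
        have : dl w w + ew w m + (-(dl w w) - ew w m) = 0 := by ring
        rw [this]; rfl
      rw [this, iot_one]
    exact (eq_inv_of_mul_eq_one_left h).symm

lemma repT1 : trV (1, 0, 0) = iot (false, false) (1, 0, 0) := by
  apply AffineEquiv.ext; rintro ⟨x1, x2, x3⟩
  simp [iot, Dmat, cvec, castZ3, trV, Prod.ext_iff]

lemma repT2 : trV (0, 1, 0) = iot (false, false) (0, 1, 0) := by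
  apply AffineEquiv.ext; rintro ⟨x1, x2, x3⟩
  simp [iot, Dmat, cvec, castZ3, trV, Prod.ext_iff]

lemma repT3 : trV (0, 0, 1) = iot (false, false) (0, 0, 1) := by
  apply AffineEquiv.ext; rintro ⟨x1, x2, x3⟩
  simp [iot, Dmat, cvec, castZ3, trV, Prod.ext_iff]

lemma repA : affAlpha = iot (true, false) (0, 0, 0) := by
  apply AffineEquiv.ext; rintro ⟨x1, x2, x3⟩
  simp [iot, Dmat, cvec, castZ3, trV, affAlpha, Prod.ext_iff]

lemma repB : affBeta = iot (false, true) (0, 0, 0) := by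
  apply AffineEquiv.ext; rintro ⟨x1, x2, x3⟩
  simp [iot, Dmat, cvec, castZ3, trV, affBeta, Prod.ext_iff]

lemma repC : affGamma = iot (true, true) (0, 0, 0) := by
  apply AffineEquiv.ext; rintro ⟨x1, x2, x3⟩
  simp [iot, Dmat, cvec, castZ3, trV, affGamma, Prod.ext_iff]

lemma gammaB_le_HB : GammaB ≤ HB := by
  rw [GammaB, Subgroup.closure_le]
  rintro g hg
  simp only [genB, Set.mem_insert_iff, Set.mem_singleton_iff] at hg
  rcases hg with rfl | rfl | rfl | rfl | rfl | rfl
  · exact ⟨(false, false), (1,0,0), repT1⟩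
  · exact ⟨(false, false), (0,1,0), repT2⟩
  · exact ⟨(false, false), (0,0,1), repT3⟩
  · exact ⟨(true, false), (0,0,0), repA⟩
  · exact ⟨(false, true), (0,0,0), repB⟩
  · exact ⟨(true, true), (0,0,0), repC⟩

open Classical in
noncomputable def pfun (g : V3 ≃ᵃ[ℝ] V3) : ZMod 4 × ZMod 4 :=
  if h : ∃ w m, g = iot w m then pf h.choose h.choose_spec.choose else 0

lemma pf_eq_of_iot_eq {w w' : W2} {m m' : Z3} (h : iot w m = iot w' m') :
    pf w m = pf w' m' := by
  obtain ⟨hw, hm⟩ := iot_inj h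
  rw [hw, hm]

lemma pfun_iot (w : W2) (m : Z3) : pfun (iot w m) = pf w m := by
  have h : ∃ w' m', iot w m = iot w' m' := ⟨w, m, rfl⟩
  unfold pfun
  rw [dif_pos h]
  exact pf_eq_of_iot_eq (h.choose_spec.choose_spec).symm

noncomputable def fmap : GammaB →* Multiplicative (ZMod 4 × ZMod 4) where
  toFun g := Multiplicative.ofAdd (pfun g.1)
  map_one' := by
    show Multiplicative.ofAdd (pfun ((1 : GammaB) : V3 ≃ᵃ[ℝ] V3)) = 1
    have h1 : ((1 : GammaB) : V3 ≃ᵃ[ℝ] V3) = iot (false, false) (0,0,0) := iot_one.symm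
    rw [h1, pfun_iot]
    rfl
  map_mul' g h := by
    obtain ⟨w, m, hg⟩ := gammaB_le_HB g.2
    obtain ⟨w', m', hh⟩ := gammaB_le_HB h.2
    show Multiplicative.ofAdd (pfun ((g * h : GammaB) : V3 ≃ᵃ[ℝ] V3)) =
      Multiplicative.ofAdd (pfun ((g : GammaB) : V3 ≃ᵃ[ℝ] V3)) *
        Multiplicative.ofAdd (pfun ((h : GammaB) : V3 ≃ᵃ[ℝ] V3))
    have hmul : ((g * h : GammaB) : V3 ≃ᵃ[ℝ] V3) = (g : V3 ≃ᵃ[ℝ] V3) * (h : V3 ≃ᵃ[ℝ] V3) := rfl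
    rw [hmul, hg, hh, iot_mul, pfun_iot, pfun_iot, pfun_iot, pf_mul]
    rfl

lemma memT1 : trV (1,0,0) ∈ GammaB := Subgroup.subset_closure (by simp [genB])
lemma memT2 : trV (0,1,0) ∈ GammaB := Subgroup.subset_closure (by simp [genB])
lemma memT3 : trV (0,0,1) ∈ GammaB := Subgroup.subset_closure (by simp [genB])
lemma memA : affAlpha ∈ GammaB := Subgroup.subset_closure (by simp [genB])
lemma memB : affBeta ∈ GammaB := Subgroup.subset_closure (by simp [genB])
lemma memC : affGamma ∈ GammaB := Subgroup.subset_closure (by simp [genB])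

noncomputable def elA : GammaB := ⟨affAlpha, memA⟩
noncomputable def elB : GammaB := ⟨affBeta, memB⟩
noncomputable def elC : GammaB := ⟨affGamma, memC⟩
noncomputable def elT1 : GammaB := ⟨trV (1,0,0), memT1⟩
noncomputable def elT2 : GammaB := ⟨trV (0,1,0), memT2⟩
noncomputable def elT3 : GammaB := ⟨trV (0,0,1), memT3⟩

lemma idA2 : elA * elA = elT1 := by
  apply Subtype.ext
  show affAlpha * affAlpha = trV (1,0,0)
  rw [repA, repT1, iot_mul]
  norm_num [wmul, dl, ew]

lemma idC2 : elC * elC = elT2 := by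
  apply Subtype.ext
  show affGamma * affGamma = trV (0,1,0)
  rw [repC, repT2, iot_mul]
  norm_num [wmul, dl, ew]

lemma idB2 : elB * elB = elT3 := by
  apply Subtype.ext
  show affBeta * affBeta = trV (0,0,1)
  rw [repB, repT3, iot_mul]
  norm_num [wmul, dl, ew]

lemma idConj1 : elT1 * elB * elT1 = elB := by
  apply Subtype.ext
  show trV (1,0,0) * affBeta * trV (1,0,0) = affBeta
  rw [repB, repT1]
  rw [iot_mul, iot_mul]
  norm_num [wmul, dl, ew]

lemma idConj3 : elT3 * elA * elT3 = elA := by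
  apply Subtype.ext
  show trV (0,0,1) * affAlpha * trV (0,0,1) = affAlpha
  rw [repA, repT3]
  rw [iot_mul, iot_mul]
  norm_num [wmul, dl, ew]

lemma idABC : elA * elB * elC * (elB * elB) = (elA * elA) * (elC * elC) := by
  apply Subtype.ext
  show affAlpha * affBeta * affGamma * (affBeta * affBeta) =
    (affAlpha * affAlpha) * (affGamma * affGamma)
  rw [repA, repB, repC]
  simp only [iot_mul]
  norm_num [wmul, dl, ew]

noncomputable abbrev AbG := Abelianization GammaB
noncomputable def aA : AbG := Abelianization.of elA
noncomputable def aB : AbG := Abelianization.of elB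
noncomputable def aC : AbG := Abelianization.of elC

lemma ht1sq : (Abelianization.of elT1) ^ 2 = 1 := by
  have h := congrArg Abelianization.of idConj1
  simp only [map_mul] at h
  have h2 : Abelianization.of elT1 * Abelianization.of elT1 * Abelianization.of elB
      = 1 * Abelianization.of elB :=
    (mul_right_comm _ _ _).trans (h.trans (one_mul _).symm)
  have h3 := mul_right_cancel h2
  rw [pow_two, h3]

lemma ht3sq : (Abelianization.of elT3) ^ 2 = 1 := by
  have h := congrArg Abelianization.of idConj3
  simp only [map_mul] at h
  have h2 : Abelianization.of elT3 * Abelianization.of elT3 * Abelianization.of elA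
      = 1 * Abelianization.of elA :=
    (mul_right_comm _ _ _).trans (h.trans (one_mul _).symm)
  have h3 := mul_right_cancel h2
  rw [pow_two, h3]

lemma ha4 : aA ^ 4 = 1 := by
  have e : aA ^ 2 = Abelianization.of elT1 := by
    rw [pow_two, aA, ← map_mul, idA2]
  have : aA ^ 4 = (aA ^ 2) ^ 2 := by rw [← pow_mul]
  rw [this, e, ht1sq]

lemma hb4 : aB ^ 4 = 1 := by
  have e : aB ^ 2 = Abelianization.of elT3 := by
    rw [pow_two, aB, ← map_mul, idB2]
  have : aB ^ 4 = (aB ^ 2) ^ 2 := by rw [← pow_mul]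
  rw [this, e, ht3sq]

lemma hcEq : aC = aA⁻¹ * (aB * (aB * aB)) := by
  have h := congrArg Abelianization.of idABC
  simp only [map_mul] at h
  have h2 : (aA * aC) * (aB * (aB * aB)) = (aA * aC) * (aA * aC) := by
    show (Abelianization.of elA * Abelianization.of elC) * _ = _
    rw [aA, aB, aC] at *
    simp only [mul_comm, mul_left_comm, mul_assoc] at h ⊢
    exact h
  have h3 : aB * (aB * aB) = aA * aC := mul_left_cancel h2
  rw [h3, inv_mul_cancel_left]

set_option maxHeartbeats 800000 in
noncomputable def gmap : Multiplicative (ZMod 4 × ZMod 4) →* AbG where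
  toFun z := aA ^ ((Multiplicative.toAdd z).1.val) * aB ^ ((Multiplicative.toAdd z).2.val)
  map_one' := by
    simp only [toAdd_one, Prod.fst_zero, Prod.snd_zero, ZMod.val_zero, pow_zero, one_mul]
  map_mul' x y := by
    simp only [toAdd_mul, Prod.fst_add, Prod.snd_add, ZMod.val_add]
    rw [← pow_eq_pow_mod _ ha4, ← pow_eq_pow_mod _ hb4, pow_add, pow_add]
    simp only [mul_comm, mul_left_comm, mul_assoc]

lemma gmap_ofAdd (x y : ZMod 4) :
    gmap (Multiplicative.ofAdd (x, y)) = aA ^ x.val * aB ^ y.val := rfl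

lemma fmap_elA : fmap elA = Multiplicative.ofAdd ((1 : ZMod 4), (0 : ZMod 4)) := by
  show Multiplicative.ofAdd (pfun affAlpha) = _
  rw [repA, pfun_iot]
  rfl

lemma fmap_elB : fmap elB = Multiplicative.ofAdd ((0 : ZMod 4), (1 : ZMod 4)) := by
  show Multiplicative.ofAdd (pfun affBeta) = _
  rw [repB, pfun_iot]
  rfl

lemma fbar_gmap (z : Multiplicative (ZMod 4 × ZMod 4)) :
    Abelianization.lift fmap (gmap z) = z := by
  have hz : gmap z = aA ^ ((Multiplicative.toAdd z).1.val) *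
      aB ^ ((Multiplicative.toAdd z).2.val) := rfl
  rw [hz, map_mul, map_pow, map_pow, aA, aB, Abelianization.lift_apply_of, Abelianization.lift_apply_of,
    fmap_elA, fmap_elB]
  have h1 : (((Multiplicative.toAdd z).1.val : ℕ) : ZMod 4) = (Multiplicative.toAdd z).1 :=
    ZMod.natCast_rightInverse _
  have h2 : (((Multiplicative.toAdd z).2.val : ℕ) : ZMod 4) = (Multiplicative.toAdd z).2 :=
    ZMod.natCast_rightInverse _
  apply Multiplicative.toAdd.injective
  simp only [toAdd_mul, toAdd_pow, toAdd_ofAdd, Prod.smul_mk, smul_zero, Prod.mk_add_mk,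
    add_zero, zero_add, nsmul_eq_mul, mul_one]
  rw [h1, h2]

lemma mem_range_aA : aA ∈ gmap.range := by
  refine ⟨Multiplicative.ofAdd ((1 : ZMod 4), (0 : ZMod 4)), ?_⟩
  rw [gmap_ofAdd]
  have h1 : (1 : ZMod 4).val = 1 := by decide
  have h0 : (0 : ZMod 4).val = 0 := by decide
  rw [h1, h0, pow_one, pow_zero, mul_one]

lemma mem_range_aB : aB ∈ gmap.range := by
  refine ⟨Multiplicative.ofAdd ((0 : ZMod 4), (1 : ZMod 4)), ?_⟩
  rw [gmap_ofAdd]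
  have h1 : (1 : ZMod 4).val = 1 := by decide
  have h0 : (0 : ZMod 4).val = 0 := by decide
  rw [h1, h0, pow_one, pow_zero, one_mul]

lemma mem_range_T1 : Abelianization.of elT1 ∈ gmap.range := by
  rw [← idA2, map_mul]
  exact mul_mem mem_range_aA mem_range_aA

lemma mem_range_T3 : Abelianization.of elT3 ∈ gmap.range := by
  rw [← idB2, map_mul]
  exact mul_mem mem_range_aB mem_range_aB

lemma mem_range_aC : aC ∈ gmap.range := by
  rw [hcEq]
  exact mul_mem (inv_mem mem_range_aA) (mul_mem mem_range_aB (mul_mem mem_range_aB mem_range_aB))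

lemma mem_range_T2 : Abelianization.of elT2 ∈ gmap.range := by
  rw [← idC2, map_mul]
  exact mul_mem mem_range_aC mem_range_aC

lemma gmap_surjective : Function.Surjective gmap := by
  have key : ∀ (x : V3 ≃ᵃ[ℝ] V3) (hx : x ∈ Subgroup.closure genB),
      Abelianization.of (⟨x, hx⟩ : GammaB) ∈ gmap.range := by
    intro x hx
    induction hx using Subgroup.closure_induction with
    | mem y hy =>
      simp only [genB, Set.mem_insert_iff, Set.mem_singleton_iff] at hy
      rcases hy with rfl | rfl | rfl | rfl | rfl | rfl
      · exact mem_range_T1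
      · exact mem_range_T2
      · exact mem_range_T3
      · exact mem_range_aA
      · exact mem_range_aB
      · exact mem_range_aC
    | one =>
      have : (⟨1, Subgroup.one_mem _⟩ : GammaB) = 1 := rfl
      rw [this, map_one]
      exact one_mem _
    | mul y z hy hz ihy ihz =>
      have : (⟨y * z, Subgroup.mul_mem _ hy hz⟩ : GammaB) =
        (⟨y, hy⟩ : GammaB) * (⟨z, hz⟩ : GammaB) := rfl
      rw [this, map_mul]
      exact mul_mem ihy ihz
    | inv y hy ihy =>
      have : (⟨y⁻¹, Subgroup.inv_mem _ hy⟩ : GammaB) = (⟨y, hy⟩ : GammaB)⁻¹ := rfl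
      rw [this, map_inv]
      exact inv_mem ihy
  intro y
  obtain ⟨x, rfl⟩ : ∃ x : GammaB, Abelianization.of x = y := by
    exact Quotient.exists_rep y
  exact key x.1 x.2

/-- The abelianization of `Γ_B` is isomorphic to `ℤ/4 × ℤ/4`
(equivalently, `H₁(B; ℤ) ≅ ℤ/4 ⊕ ℤ/4` for the flat 3-manifold `B`). -/
theorem statement2 :
    Nonempty (Abelianization GammaB ≃* Multiplicative (ZMod 4 × ZMod 4)) := by
  have hinj : Function.Injective gmap := by
    intro x y hxy
    have h := congrArg (Abelianization.lift fmap) hxy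
    rwa [fbar_gmap, fbar_gmap] at h
  exact ⟨(MulEquiv.ofBijective gmap ⟨hinj, gmap_surjective⟩).symm⟩
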